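/- Let F = {f_n} be a frame for H with bounds A, B, and suppose the sequence E = {e_n} in H satisfies ‖Σ_{n∈F₀} c_n (e_n − f_n)‖ ≤ μ(Σ_{n∈F₀}|c_n|²)^{1/2} for all finite F₀ and scalars c_n, with 0 < μ < √A. Then E is a Bessel sequence with bound (√B + μ)², i.e., Σ_n |⟨f, e_n⟩|² ≤ (√B + μ)²‖f‖² for all f ∈ H. -/

import Mathlib

/-!
Write `T = √B + μ`. The upper frame bound of `F` bounds its synthesis operator by `√B` on
finitely supported coefficients, and the perturbation hypothesis adds at most `μ`, so
`‖∑ c n • E n‖ ≤ T ‖c‖₂`. Testing this with `c n = ⟪E n, f⟫` gives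
`∑ |⟪f, E n⟫|² = ⟪f, ∑ c n • E n⟫ ≤ ‖f‖ T (∑ |⟪f, E n⟫|²)^{1/2}` on every finite set,
hence the Bessel bound `T² ‖f‖²`.
-/

open Finset RCLike

section

variable {𝕜 H ι : Type*} [RCLike 𝕜] [NormedAddCommGroup H] [InnerProductSpace 𝕜 H]

theorem norm_le_of_forall_norm_inner_le {x : H} {M : ℝ} (hM : 0 ≤ M)
    (h : ∀ y : H, ‖(inner 𝕜 y x : 𝕜)‖ ≤ M * ‖y‖) : ‖x‖ ≤ M := by
  rw [← innerSL_apply_norm 𝕜 x]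
  refine ContinuousLinearMap.opNorm_le_bound _ hM fun y => ?_
  rw [innerSL_apply_apply, norm_inner_symm]
  exact h y

theorem norm_sum_smul_le_of_sum_norm_inner_sq_le {F : ι → H} {B : ℝ} (s : Finset ι)
    (hB : ∀ y : H, ∑ n ∈ s, ‖(inner 𝕜 y (F n) : 𝕜)‖ ^ 2 ≤ B * ‖y‖ ^ 2) (c : ι → 𝕜) :
    ‖∑ n ∈ s, c n • F n‖ ≤ √B * √(∑ n ∈ s, ‖c n‖ ^ 2) := by
  refine norm_le_of_forall_norm_inner_le (𝕜 := 𝕜) (by positivity) fun y => ?_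
  calc ‖(inner 𝕜 y (∑ n ∈ s, c n • F n) : 𝕜)‖
      ≤ ∑ n ∈ s, ‖c n‖ * ‖(inner 𝕜 y (F n) : 𝕜)‖ := by
        simpa only [inner_sum, inner_smul_right, norm_mul] using
          norm_sum_le s fun n => c n * (inner 𝕜 y (F n) : 𝕜)
    _ ≤ √(∑ n ∈ s, ‖c n‖ ^ 2) * √(∑ n ∈ s, ‖(inner 𝕜 y (F n) : 𝕜)‖ ^ 2) :=
        Real.sum_mul_le_sqrt_mul_sqrt s _ _
    _ ≤ √(∑ n ∈ s, ‖c n‖ ^ 2) * (√B * ‖y‖) := by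
        gcongr
        rw [← Real.sqrt_sq (norm_nonneg y), ← Real.sqrt_mul' B (sq_nonneg _)]
        exact Real.sqrt_le_sqrt (hB y)
    _ = √B * √(∑ n ∈ s, ‖c n‖ ^ 2) * ‖y‖ := by ring

theorem inner_sum_inner_smul (f : H) (E : ι → H) (s : Finset ι) :
    (inner 𝕜 f (∑ n ∈ s, (inner 𝕜 (E n) f : 𝕜) • E n) : 𝕜)
      = ((∑ n ∈ s, ‖(inner 𝕜 f (E n) : 𝕜)‖ ^ 2 : ℝ) : 𝕜) := by
  simp only [inner_sum, inner_smul_right, ofReal_sum, ofReal_pow]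
  refine sum_congr rfl fun n _ => ?_
  rw [← inner_conj_symm f (E n), norm_conj, mul_conj]

theorem sum_norm_inner_sq_le_of_norm_sum_smul_le {E : ι → H} {T : ℝ}
    (hT : ∀ (s : Finset ι) (c : ι → 𝕜), ‖∑ n ∈ s, c n • E n‖ ≤ T * √(∑ n ∈ s, ‖c n‖ ^ 2))
    (f : H) (s : Finset ι) :
    ∑ n ∈ s, ‖(inner 𝕜 f (E n) : 𝕜)‖ ^ 2 ≤ T ^ 2 * ‖f‖ ^ 2 := by
  set S := ∑ n ∈ s, ‖(inner 𝕜 f (E n) : 𝕜)‖ ^ 2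
  have hS : 0 ≤ S := by positivity
  have hcoeff : ∑ n ∈ s, ‖(inner 𝕜 (E n) f : 𝕜)‖ ^ 2 = S :=
    sum_congr rfl fun n _ => by rw [norm_inner_symm]
  have hle : S ≤ ‖f‖ * (T * √S) :=
    calc S = ‖(inner 𝕜 f (∑ n ∈ s, (inner 𝕜 (E n) f : 𝕜) • E n) : 𝕜)‖ := by
          rw [inner_sum_inner_smul, norm_ofReal, abs_of_nonneg hS]
      _ ≤ ‖f‖ * ‖∑ n ∈ s, (inner 𝕜 (E n) f : 𝕜) • E n‖ := norm_inner_le_norm _ _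
      _ ≤ ‖f‖ * (T * √S) := by
          gcongr
          simpa only [hcoeff] using hT s fun n => inner 𝕜 (E n) f
  have hsqrt : √S * √S = S := Real.mul_self_sqrt hS
  nlinarith [Real.sqrt_nonneg S, sq_nonneg (√S - T * ‖f‖), norm_nonneg f]

theorem summable_norm_inner_sq_of_lower_bound {F : ι → H} {A : ℝ} (hA : 0 < A)
    (hlower : ∀ y : H, A * ‖y‖ ^ 2 ≤ ∑' n, ‖(inner 𝕜 y (F n) : 𝕜)‖ ^ 2) (y : H) :
    Summable fun n => ‖(inner 𝕜 y (F n) : 𝕜)‖ ^ 2 := by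
  rcases eq_or_ne y 0 with rfl | hy
  · simp
  · by_contra hns
    have hpos : 0 < A * ‖y‖ ^ 2 := by positivity
    exact (hpos.trans_le (hlower y)).ne' (tsum_eq_zero_of_not_summable hns)

end

theorem stmt_8_general {H : Type*} [NormedAddCommGroup H] [InnerProductSpace ℂ H]
    (F E : ℤ → H) (A B mu : ℝ) (hA : 0 < A)
    (hframe : ∀ f : H,
      A * ‖f‖ ^ 2 ≤ ∑' n : ℤ, ‖(inner ℂ f (F n) : ℂ)‖ ^ 2 ∧
      ∑' n : ℤ, ‖(inner ℂ f (F n) : ℂ)‖ ^ 2 ≤ B * ‖f‖ ^ 2)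
    (hpert : ∀ (F₀ : Finset ℤ) (c : ℤ → ℂ),
      ‖∑ n ∈ F₀, c n • (E n - F n)‖ ≤ mu * Real.sqrt (∑ n ∈ F₀, ‖c n‖ ^ 2)) :
    ∀ f : H, ∑' n : ℤ, ‖(inner ℂ f (E n) : ℂ)‖ ^ 2 ≤ (Real.sqrt B + mu) ^ 2 * ‖f‖ ^ 2 := by
  have hsummable := summable_norm_inner_sq_of_lower_bound hA fun y => (hframe y).1
  have hbessel (s : Finset ℤ) (y : H) : ∑ n ∈ s, ‖(inner ℂ y (F n) : ℂ)‖ ^ 2 ≤ B * ‖y‖ ^ 2 :=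
    ((hsummable y).sum_le_tsum s fun n _ => sq_nonneg _).trans (hframe y).2
  have hsynthesis (s : Finset ℤ) (c : ℤ → ℂ) :
      ‖∑ n ∈ s, c n • E n‖ ≤ (√B + mu) * √(∑ n ∈ s, ‖c n‖ ^ 2) :=
    calc ‖∑ n ∈ s, c n • E n‖
        = ‖∑ n ∈ s, c n • F n + ∑ n ∈ s, c n • (E n - F n)‖ := by
          simp only [smul_sub, sum_sub_distrib, add_sub_cancel]
      _ ≤ ‖∑ n ∈ s, c n • F n‖ + ‖∑ n ∈ s, c n • (E n - F n)‖ := norm_add_le _ _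
      _ ≤ √B * √(∑ n ∈ s, ‖c n‖ ^ 2) + mu * √(∑ n ∈ s, ‖c n‖ ^ 2) :=
          add_le_add (norm_sum_smul_le_of_sum_norm_inner_sq_le s (hbessel s) c) (hpert s c)
      _ = (√B + mu) * √(∑ n ∈ s, ‖c n‖ ^ 2) := by ring
  intro f
  exact tsum_le_of_sum_le' (by positivity)
    (sum_norm_inner_sq_le_of_norm_sum_smul_le hsynthesis f)

/-- Upper (Bessel) bound part of the Casazza–Christensen argument. -/
theorem stmt_8 {H : Type*} [NormedAddCommGroup H] [InnerProductSpace ℂ H] [CompleteSpace H]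
    (F E : ℤ → H) (A B mu : ℝ) (hA : 0 < A) (hAB : A ≤ B)
    (hframe : ∀ f : H,
      A * ‖f‖ ^ 2 ≤ ∑' n : ℤ, ‖(inner ℂ f (F n) : ℂ)‖ ^ 2 ∧
      ∑' n : ℤ, ‖(inner ℂ f (F n) : ℂ)‖ ^ 2 ≤ B * ‖f‖ ^ 2)
    (hmu0 : 0 < mu) (hmuA : mu < Real.sqrt A)
    (hpert : ∀ (F₀ : Finset ℤ) (c : ℤ → ℂ),
      ‖∑ n ∈ F₀, c n • (E n - F n)‖ ≤ mu * Real.sqrt (∑ n ∈ F₀, ‖c n‖ ^ 2)) :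
    ∀ f : H, ∑' n : ℤ, ‖(inner ℂ f (E n) : ℂ)‖ ^ 2 ≤ (Real.sqrt B + mu) ^ 2 * ‖f‖ ^ 2 :=
  stmt_8_general F E A B mu hA hframe hpert
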